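/- Let G be a finite abelian group with diam^+(G) ≥ 3. Then the maximum cardinality of a generating set A of G with diam_A^+(G) ≥ 3 equals ⌊|G|/2⌋. In particular, if A ⊆ G satisfies |A| > |G|/2, then every element of G is a sum of at most 2 elements of A ∪ {0}. -/

import Mathlib

open Pointwise

variable {G : Type*}

/-- The `n`-fold iterated sumset of a set `A` (with `0` summands giving `{0}`). -/
def iterSum [AddCommGroup G] (A : Set G) : ℕ → Set G
  | 0 => {0}
  | n + 1 => iterSum A n + A

/-- `A` generates `G` as a group. -/
def Spans [AddCommGroup G] (A : Set G) : Prop := AddSubgroup.closure A = ⊤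

/-- The positive diameter of `G` with respect to `A`: the least `n` with
`n·(A ∪ {0}) = G`. -/
noncomputable def diamPlus [AddCommGroup G] (A : Set G) : ℕ :=
  sInf {n : ℕ | iterSum (insert 0 A) n = Set.univ}

/-- The positive length of `g` with respect to `A`. -/
noncomputable def lenPlus [AddCommGroup G] (A : Set G) (g : G) : ℕ :=
  sInf {n : ℕ | g ∈ iterSum (insert 0 A) n}

/-- The absolute positive diameter of `G`. -/
noncomputable def diamAbs (G : Type*) [AddCommGroup G] : ℕ :=
  sSup {d : ℕ | ∃ A : Set G, Spans A ∧ diamPlus A = d}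

/-- `A` is aperiodic: its period (stabilizer) is trivial. -/
def Aperiodic [AddCommGroup G] (A : Set G) : Prop :=
  ∀ g : G, A + {g} = A → g = 0

/-- `A` is `ρ`-maximal: maximal under inclusion subject to `(ρ-1)·(A ∪ {0}) ≠ G`. -/
def RhoMax [AddCommGroup G] (ρ : ℕ) (A : Set G) : Prop :=
  iterSum (insert 0 A) (ρ - 1) ≠ Set.univ ∧
    ∀ B : Set G, A ⊆ B → iterSum (insert 0 B) (ρ - 1) ≠ Set.univ → B = A

/-- A standard generating set of type `m`. -/
def StandardGen [AddCommGroup G] {r : ℕ} (m : Fin r → ℕ) (e : Fin r → G) : Prop :=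
  (∀ i, addOrderOf (e i) = m i) ∧
    ∀ g : G, ∃! lam : Fin r → ℕ, (∀ i, lam i < m i) ∧ g = ∑ i, lam i • e i

noncomputable def tInv (ρ : ℕ) (G : Type*) [AddCommGroup G] : ℕ :=
  sSup {k : ℕ | ∃ A : Set G, Aperiodic A ∧ RhoMax ρ A ∧ Spans A ∧ A.ncard = k}

noncomputable def sInv (ρ : ℕ) (G : Type*) [AddCommGroup G] : ℕ :=
  sSup {k : ℕ | ∃ A : Set G, Spans A ∧ ρ ≤ diamPlus A ∧ A.ncard = k}

/-! If `2 * |A| > |G|`, then `A` meets `g - A` for every `g`, so `A + A = G`; this is the second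
claim and gives the upper bound `|G| / 2`.

For the lower bound, take `g ∉ 2·(A ∪ {0})` and a maximal `B ⊇ A` with `g ∉ 2·(B ∪ {0})`. Each
`x ∉ B` lies in `g - (B ∪ {0})` or satisfies `2x = g`, so `|G| ≤ 2|B| + 1 + #{x | 2x = g}`.
If `|G|` is odd, halving is unique and `|B| = ⌊|G|/2⌋`. If `|G|` is even, start instead from
`B = ∅` and a `g` that is not a double, so that `|B| = |G|/2`; should `B` fail to generate, it is an
index-two subgroup `H`, and trading some `x₀ ∈ H \ {0}` for `g - x₀` gives a generating set that
still misses `g` as soon as `|H| ≥ 3`. In groups of order at most `4`, `A ∪ {0}` itself works. -/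

section

variable [AddCommGroup G]

open Set

lemma iterSum_eq_nsmul (S : Set G) (n : ℕ) : iterSum S n = n • S := by
  induction n with
  | zero => rfl
  | succ n ih => rw [iterSum, ih, succ_nsmul]

lemma exists_nsmul_insert_zero_eq_univ [Finite G] {A : Set G} (hA : Spans A) :
    ∃ n : ℕ, n • insert 0 A = (univ : Set G) := by
  have hmem : ∀ g ∈ AddSubmonoid.closure A, ∃ n : ℕ, g ∈ n • insert (0 : G) A := by
    intro g hg
    induction hg using AddSubmonoid.closure_induction with
    | mem a ha => exact ⟨1, by simpa using mem_insert_of_mem 0 ha⟩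
    | zero => exact ⟨0, by simp⟩
    | add x y _ _ hx hy =>
      obtain ⟨m, hm⟩ := hx
      obtain ⟨k, hk⟩ := hy
      exact ⟨m + k, add_nsmul (insert 0 A) m k ▸ add_mem_add hm hk⟩
  have hall : ∀ g : G, ∃ n : ℕ, g ∈ n • insert (0 : G) A := fun g =>
    hmem g (by rw [← AddSubgroup.closure_toAddSubmonoid_of_finite, hA]; trivial)
  choose n hn using hall
  cases nonempty_fintype G
  exact ⟨Finset.univ.sup n, eq_univ_of_forall fun g =>
    nsmul_subset_nsmul_right (mem_insert 0 A) (Finset.le_sup (Finset.mem_univ g)) (hn g)⟩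

lemma three_le_diamPlus_iff [Finite G] {A : Set G} (hA : Spans A) :
    3 ≤ diamPlus A ↔ 2 • insert 0 A ≠ (univ : Set G) := by
  simp only [diamPlus, iterSum_eq_nsmul]
  constructor
  · intro h3 h2
    have := Nat.sInf_le (show 2 ∈ {n | n • insert (0 : G) A = univ} from h2)
    omega
  · intro h2
    refine le_csInf (exists_nsmul_insert_zero_eq_univ hA) fun n hn => ?_
    by_contra! hlt
    exact h2 (univ_subset_iff.1 (hn ▸ nsmul_subset_nsmul_right (mem_insert 0 A) (by omega)))

lemma add_self_eq_univ_of_card_lt [Finite G] {A : Set G} (h : Nat.card G < 2 * A.ncard) :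
    A + A = univ := by
  refine eq_univ_of_forall fun g => ?_
  have hdisj : ¬ Disjoint A ((g - ·) '' A) := by
    intro hd
    have := ncard_union_eq hd (toFinite _) (toFinite _)
    have := ncard_image_of_injective A (sub_right_injective (b := g))
    have := ncard_le_card (A ∪ (g - ·) '' A)
    omega
  obtain ⟨_, ha, b, hb, rfl⟩ := not_disjoint_iff.1 hdisj
  exact mem_add.2 ⟨_, ha, b, hb, sub_add_cancel g b⟩

lemma two_nsmul_insert_zero_eq_univ_of_card_lt [Finite G] {A : Set G}
    (h : Nat.card G < 2 * A.ncard) : 2 • insert 0 A = (univ : Set G) :=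
  univ_subset_iff.1 <| add_self_eq_univ_of_card_lt h ▸ two_nsmul (insert (0 : G) A) ▸
    add_subset_add (subset_insert 0 A) (subset_insert 0 A)

lemma two_mul_ncard_le_of_two_nsmul_ne_univ [Finite G] {A : Set G}
    (h : 2 • insert 0 A ≠ (univ : Set G)) : 2 * A.ncard ≤ Nat.card G := by
  contrapose! h
  exact two_nsmul_insert_zero_eq_univ_of_card_lt h

lemma mem_or_of_maximal {g : G} {B : Set G}
    (hB : Maximal (fun C : Set G => g ∉ 2 • insert 0 C) B) (x : G) :
    x ∈ B ∨ x ∈ (g - ·) '' insert 0 B ∨ 2 • x = g := by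
  by_cases hx : x ∈ B
  · exact .inl hx
  have hg : g ∈ insert x (insert 0 B) + insert x (insert 0 B) := by
    simpa [two_nsmul, insert_comm] using hB.not_prop_of_gt (ssubset_insert hx)
  obtain ⟨u, hu, v, hv, huv : u + v = g⟩ := hg
  rcases hu with rfl | hu <;> rcases hv with rfl | hv
  · exact .inr (.inr (by rwa [two_nsmul]))
  · exact .inr (.inl ⟨v, hv, (eq_sub_of_add_eq huv).symm⟩)
  · exact .inr (.inl ⟨u, hu, (eq_sub_of_add_eq' huv).symm⟩)
  · exact (hB.prop (huv ▸ two_nsmul (insert 0 B) ▸ add_mem_add hu hv)).elim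

lemma card_le_of_maximal [Finite G] {g : G} {B : Set G}
    (hB : Maximal (fun C : Set G => g ∉ 2 • insert 0 C) B) :
    Nat.card G ≤ 2 * B.ncard + 1 + {x : G | 2 • x = g}.ncard := by
  have hcover : univ ⊆ B ∪ (g - ·) '' insert 0 B ∪ {x : G | 2 • x = g} :=
    fun x _ => by simpa only [mem_union, mem_ofPred_eq, or_assoc] using mem_or_of_maximal hB x
  have himage : ((g - ·) '' insert 0 B).ncard ≤ B.ncard + 1 :=
    (ncard_image_of_injective _ sub_right_injective).trans_le (ncard_insert_le 0 B)
  have := ncard_le_ncard hcover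
  have := ncard_union_le (B ∪ (g - ·) '' insert 0 B) {x : G | 2 • x = g}
  have := ncard_union_le B ((g - ·) '' insert 0 B)
  rw [ncard_univ] at *
  omega

lemma AddSubgroup.two_mul_card_le_of_ne_top [Finite G] {H : AddSubgroup G} (hH : H ≠ ⊤) :
    2 * Nat.card H ≤ Nat.card G := by
  rw [← H.card_mul_index, mul_comm]
  exact Nat.mul_le_mul_left _ (H.one_lt_index_of_ne_top hH)

lemma exists_forall_two_nsmul_ne_of_even [Finite G] (heven : Even (Nat.card G)) :
    ∃ g : G, ∀ x : G, 2 • x ≠ g := by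
  have : Fact (Nat.Prime 2) := ⟨Nat.prime_two⟩
  obtain ⟨y, hy⟩ := exists_prime_addOrderOf_dvd_card' 2 heven.two_dvd
  have hy0 : y ≠ 0 := by rintro rfl; simp at hy
  have hnotinj : ¬ Function.Injective (fun x : G => 2 • x) := fun hinj =>
    hy0 (hinj (by simp only [← hy, addOrderOf_nsmul_eq_zero, smul_zero]))
  simpa [Function.Surjective] using mt Finite.injective_iff_surjective.2 hnotinj

lemma exists_spans_of_two_mul_card_eq [Finite G] {H : AddSubgroup G}
    (hH : 2 * Nat.card H = Nat.card G) (h3 : 3 ≤ Nat.card H) {g : G} (hgH : g ∉ H)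
    (hg : ∀ x : G, 2 • x ≠ g) :
    ∃ C : Set G, Spans C ∧ g ∉ 2 • insert 0 C ∧ C.ncard = Nat.card H := by
  have hcard : 1 < ((H : Set G) \ {0}).ncard := by
    rw [ncard_sdiff_singleton_of_mem H.zero_mem, ← Nat.card_coe_set_eq]
    simp only [SetLike.coe_sort_coe]
    omega
  obtain ⟨x₀, y, ⟨hx₀H, hx₀0⟩, ⟨hyH, hy0⟩, hx₀y⟩ := (one_lt_ncard_iff).1 hcard
  set C := insert (g - x₀) ((H : Set G) \ {x₀})
  have hgx₀ : g - x₀ ∉ H := fun h => hgH (by simpa using H.add_mem h hx₀H)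
  have hC0 : insert 0 C = C :=
    insert_eq_of_mem (mem_insert_of_mem _ ⟨H.zero_mem, Ne.symm hx₀0⟩)
  have hspan : Spans C := by
    have hsub : ∀ z ∈ H, z ≠ x₀ → z ∈ AddSubgroup.closure C := fun z hz hzx =>
      AddSubgroup.subset_closure (mem_insert_of_mem _ ⟨hz, hzx⟩)
    have hHle : H ≤ AddSubgroup.closure C := fun z hz => by
      rcases eq_or_ne z x₀ with rfl | hzx₀
      · -- `z = (z - y) + y` with both summands in `H \ {z}`
        simpa using AddSubgroup.add_mem _ (hsub (z - y) (H.sub_mem hz hyH) (by simpa using hy0))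
          (hsub y hyH (Ne.symm hx₀y))
      · exact hsub z hz hzx₀
    by_contra hne
    have := AddSubgroup.two_mul_card_le_of_ne_top hne
    exact hgx₀ (AddSubgroup.eq_of_le_of_card_ge hHle (by omega) ▸
      AddSubgroup.subset_closure (mem_insert _ _))
  refine ⟨C, hspan, ?_, ?_⟩
  · rw [hC0, two_nsmul]
    rintro ⟨u, hu, v, hv, huv : u + v = g⟩
    rcases hu with rfl | ⟨huH, hux₀⟩ <;> rcases hv with rfl | ⟨hvH, hvx₀⟩
    · exact hg _ (by rwa [two_nsmul])
    · exact hvx₀ (mem_singleton_iff.2 (by linear_combination (norm := abel) huv))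
    · exact hux₀ (mem_singleton_iff.2 (by linear_combination (norm := abel) huv))
    · exact hgH (huv ▸ H.add_mem huH hvH)
  · rw [ncard_insert_of_notMem (fun h => hgx₀ h.1), ncard_sdiff_singleton_of_mem hx₀H,
      ← Nat.card_coe_set_eq]
    simp only [SetLike.coe_sort_coe]
    omega

lemma exists_spans_ncard_eq_half_of_even [Finite G] (heven : Even (Nat.card G))
    (h6 : 6 ≤ Nat.card G) :
    ∃ B : Set G, Spans B ∧ 2 • insert 0 B ≠ (univ : Set G) ∧ B.ncard = Nat.card G / 2 := by
  obtain ⟨g, hg⟩ := exists_forall_two_nsmul_ne_of_even heven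
  have hg0 : g ∉ 2 • insert 0 (∅ : Set G) := by
    simpa using (hg 0).symm
  obtain ⟨B, -, hB⟩ := Finite.exists_le_maximal (p := fun C : Set G => g ∉ 2 • insert 0 C) hg0
  have hBne : 2 • insert 0 B ≠ (univ : Set G) := fun h => hB.prop (h ▸ mem_univ g)
  have hBcard : B.ncard = Nat.card G / 2 := by
    have hcount := card_le_of_maximal hB
    have := two_mul_ncard_le_of_two_nsmul_ne_univ hBne
    have hT : {x : G | 2 • x = g} = ∅ := eq_empty_of_forall_notMem hg
    rw [hT, ncard_empty] at hcount
    obtain ⟨m, hm⟩ := heven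
    omega
  by_cases hspan : Spans B
  · exact ⟨B, hspan, hBne, hBcard⟩
  set H := AddSubgroup.closure B
  have hHtop : H ≠ ⊤ := hspan
  have hBH : B = H := by
    have := AddSubgroup.two_mul_card_le_of_ne_top hHtop
    refine eq_of_subset_of_ncard_le AddSubgroup.subset_closure ?_
    rw [← Nat.card_coe_set_eq]
    simp only [SetLike.coe_sort_coe]
    omega
  have hgH : g ∉ H := fun h => hB.prop <| two_nsmul (insert 0 B) ▸
    ⟨g, mem_insert_of_mem 0 (hBH ▸ h), 0, mem_insert 0 B, add_zero g⟩
  have hHcard : Nat.card H = Nat.card G / 2 := by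
    rw [← hBcard, hBH, ← Nat.card_coe_set_eq]
    rfl
  have h2H : 2 * Nat.card H = Nat.card G := by
    rw [hHcard, Nat.two_mul_div_two_of_even heven]
  have h3H : 3 ≤ Nat.card H := by omega
  obtain ⟨C, hC, hgC, hCcard⟩ := exists_spans_of_two_mul_card_eq h2H h3H hgH hg
  exact ⟨C, hC, fun h => hgC (h ▸ mem_univ g), hCcard.trans hHcard⟩

lemma exists_spans_ncard_eq_half_of_odd [Finite G] (hodd : Odd (Nat.card G)) {A : Set G}
    (hA : Spans A) (h2 : 2 • insert 0 A ≠ (univ : Set G)) :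
    ∃ B : Set G, Spans B ∧ 2 • insert 0 B ≠ (univ : Set G) ∧ B.ncard = Nat.card G / 2 := by
  obtain ⟨g, hg⟩ := ne_univ_iff_exists_notMem _ |>.1 h2
  obtain ⟨B, hAB, hB⟩ := Finite.exists_le_maximal (p := fun C : Set G => g ∉ 2 • insert 0 C) hg
  have hBne : 2 • insert 0 B ≠ (univ : Set G) := fun h => hB.prop (h ▸ mem_univ g)
  have hhalf : {x : G | 2 • x = g}.ncard ≤ 1 := by
    have hinj := hodd.coprime_two_right.nsmul_right_bijective.injective
    exact (ncard_le_one (toFinite _)).2 fun x hx y hy => hinj (hx.trans hy.symm)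
  have := card_le_of_maximal hB
  have := two_mul_ncard_le_of_two_nsmul_ne_univ hBne
  obtain ⟨m, hm⟩ := hodd
  refine ⟨B, ?_, hBne, by omega⟩
  exact eq_top_iff.2 (hA ▸ AddSubgroup.closure_mono hAB)

lemma exists_spans_ncard_eq_half_of_card_le_four [Finite G] (h4 : Nat.card G ≤ 4) {A : Set G}
    (hA : Spans A) (h2 : 2 • insert 0 A ≠ (univ : Set G)) :
    ∃ B : Set G, Spans B ∧ 2 • insert 0 B ≠ (univ : Set G) ∧ B.ncard = Nat.card G / 2 := by
  obtain ⟨a, haA, ha0⟩ : ∃ a ∈ A, a ≠ 0 := by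
    by_contra! hA0
    refine h2 (eq_univ_of_forall fun x => ?_)
    have hx : x ∈ AddSubgroup.closure A := hA ▸ AddSubgroup.mem_top x
    rw [AddSubgroup.closure_eq_bot_iff.2 hA0, AddSubgroup.mem_bot] at hx
    rw [hx, two_nsmul]
    exact ⟨0, mem_insert 0 A, 0, mem_insert 0 A, add_zero 0⟩
  have hspan : Spans (insert 0 A) := (AddSubgroup.closure_insert_zero A).trans hA
  have hne : 2 • insert 0 (insert 0 A) ≠ (univ : Set G) := by rwa [insert_idem]
  have := two_mul_ncard_le_of_two_nsmul_ne_univ hne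
  have := ncard_le_ncard (insert_subset_insert (singleton_subset_iff.2 haA) : {0, a} ⊆ insert 0 A)
  rw [ncard_pair ha0.symm] at this
  exact ⟨insert 0 A, hspan, hne, by omega⟩

lemma exists_spans_ncard_eq_half [Finite G] {A : Set G} (hA : Spans A)
    (h2 : 2 • insert 0 A ≠ (univ : Set G)) :
    ∃ B : Set G, Spans B ∧ 2 • insert 0 B ≠ (univ : Set G) ∧ B.ncard = Nat.card G / 2 := by
  rcases le_or_gt (Nat.card G) 4 with h4 | h4
  · exact exists_spans_ncard_eq_half_of_card_le_four h4 hA h2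
  rcases Nat.even_or_odd (Nat.card G) with heven | hodd
  · have : 6 ≤ Nat.card G := by obtain ⟨m, hm⟩ := heven; omega
    exact exists_spans_ncard_eq_half_of_even heven this
  · exact exists_spans_ncard_eq_half_of_odd hodd hA h2

lemma exists_spans_three_le_diamPlus (h : 3 ≤ diamAbs G) :
    ∃ A : Set G, Spans A ∧ 3 ≤ diamPlus A := by
  have hne : {d : ℕ | ∃ A : Set G, Spans A ∧ diamPlus A = d}.Nonempty := by
    by_contra hempty
    rw [not_nonempty_iff_eq_empty] at hempty
    simp [diamAbs, hempty] at h
  obtain ⟨_, ⟨A, hA, rfl⟩, hlt⟩ := exists_lt_of_lt_csSup hne (h : 2 < diamAbs G)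
  exact ⟨A, hA, hlt⟩

end

theorem stmt7 (G : Type*) [AddCommGroup G] [Finite G] (h : 3 ≤ diamAbs G) :
    sSup {k : ℕ | ∃ A : Set G, Spans A ∧ 3 ≤ diamPlus A ∧ A.ncard = k} = Nat.card G / 2 ∧
      ∀ A : Set G, Nat.card G < 2 * A.ncard → iterSum (insert 0 A) 2 = Set.univ := by
  obtain ⟨A, hA, hA3⟩ := exists_spans_three_le_diamPlus h
  obtain ⟨B, hB, hB2, hBcard⟩ :=
    exists_spans_ncard_eq_half hA ((three_le_diamPlus_iff hA).1 hA3)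
  have hmem : Nat.card G / 2 ∈ {k : ℕ | ∃ A : Set G, Spans A ∧ 3 ≤ diamPlus A ∧ A.ncard = k} :=
    ⟨B, hB, (three_le_diamPlus_iff hB).2 hB2, hBcard⟩
  have hbound : ∀ k ∈ {k : ℕ | ∃ A : Set G, Spans A ∧ 3 ≤ diamPlus A ∧ A.ncard = k},
      k ≤ Nat.card G / 2 := by
    rintro _ ⟨A, hA, hA3, rfl⟩
    have := two_mul_ncard_le_of_two_nsmul_ne_univ ((three_le_diamPlus_iff hA).1 hA3)
    omega
  refine ⟨le_antisymm (csSup_le ⟨_, hmem⟩ hbound) (le_csSup ⟨_, hbound⟩ hmem), fun A hA => ?_⟩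
  rw [iterSum_eq_nsmul]
  exact two_nsmul_insert_zero_eq_univ_of_card_lt hA
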